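/- For a real constant λ > 1 define on ℓ²(ℤ) the operators A^λ = D_{a^λ} and B^λ = U D_{b^λ}, where a^λ(n) = exp(−λⁿ) if n ≥ 1 is even and 1 otherwise, b^λ(n) = exp(−λⁿ) if n ≥ 1 is odd and 1 otherwise. If λ ≠ μ are real constants with λ > 1 and μ > 1, then Hom((H^λ,f^λ),(H^μ,f^μ)) = 0: whenever T₁ and T₂ are bounded operators on ℓ²(ℤ) with T₂ A^λ = A^μ T₁ and T₂ B^λ = B^μ T₁, one has T₁ = T₂ = 0. In particular the transitive Kronecker representations (H^λ,f^λ) = (ℓ²(ℤ), ℓ²(ℤ); A^λ, B^λ), λ > 1, are pairwise non-isomorphic, so there exist continuously many non-isomorphic transitive Hilbert representations of the Kronecker quiver. -/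

import Mathlib

/-!
Write `t i j` for the matrix entry `(T₂ eⱼ)ᵢ`. Intertwining the diagonal operators gives
`a^λ(j) t i j = a^μ(i) (T₁ eⱼ)ᵢ`, intertwining the weighted shifts gives
`b^λ(j) t (i+1) (j+1) = b^μ(i) (T₁ eⱼ)ᵢ`, hence
`|t (i+1) (j+1)| = exp (φ_λ(j) - φ_μ(i)) |t i j|` with `φ_λ = log a^λ - log b^λ`, which is
`-(-λ)ⁿ` for `n ≥ 1` and `0` otherwise. The partial sums of `φ_λ` oscillate with amplitude of
order `λⁿ`, so for `λ ≠ μ` the oscillation of the larger parameter wins and the differences of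
partial sums along a diagonal are unbounded above. As every entry is bounded by `‖T₂‖`, all
entries of `T₂` vanish, and then so do those of `T₁`.
-/

open scoped lp ENNReal
open Filter Finset

section LpSingle

variable {ι 𝕜 : Type*} [DecidableEq ι] {p : ℝ≥0∞}

instance lp.nontrivial_of_nonempty [Nonempty ι] [NormedField 𝕜] :
    Nontrivial (lp (fun _ : ι => 𝕜) p) := by
  inhabit ι
  refine nontrivial_of_ne (lp.single p default 1) 0 fun h => one_ne_zero (α := 𝕜) ?_
  simpa using congr($h default)

lemma lp.single_eq_smul_single_one [NormedField 𝕜] (n : ι) (c : 𝕜) :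
    lp.single (E := fun _ : ι => 𝕜) p n c = c • lp.single p n 1 := by
  rw [← lp.single_smul, smul_eq_mul, mul_one]

variable [Fact (1 ≤ p)]

lemma lp.apply_apply_of_map_single [NormedField 𝕜] (hp : p ≠ ⊤) {σ : ι → ι} (hσ : σ.Injective)
    {c : ι → 𝕜} {T : lp (fun _ : ι => 𝕜) p →L[𝕜] lp (fun _ : ι => 𝕜) p}
    (hT : ∀ n, T (lp.single p n 1) = c n • lp.single p (σ n) 1)
    (y : lp (fun _ : ι => 𝕜) p) (n : ι) :
    T y (σ n) = c n * y n := by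
  have hsum := (lp.hasSum_single hp y).mapL ((lp.evalCLM 𝕜 _ p (σ n)).comp T)
  refine hsum.unique (hasSum_single n fun k hk => ?_) |>.trans ?_
  · rw [ContinuousLinearMap.comp_apply, lp.single_eq_smul_single_one, map_smul, hT]
    simp [lp.evalCLM, Pi.single_eq_of_ne (hσ.ne hk).symm]
  · rw [ContinuousLinearMap.comp_apply, lp.single_eq_smul_single_one, map_smul, hT]
    simp [lp.evalCLM, mul_comm]

lemma lp.eq_zero_of_apply_single_apply [NormedField 𝕜] (hp : p ≠ ⊤)
    {T : lp (fun _ : ι => 𝕜) p →L[𝕜] lp (fun _ : ι => 𝕜) p}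
    (hT : ∀ i j, T (lp.single p j 1) i = 0) : T = 0 := by
  refine lp.ext_continuousLinearMap hp fun j => ContinuousLinearMap.ext fun c => lp.ext ?_
  funext i
  rw [ContinuousLinearMap.comp_apply, lp.singleContinuousLinearMap_apply,
    lp.single_eq_smul_single_one, map_smul]
  simp [hT]

lemma lp.norm_apply_single_apply_le [NontriviallyNormedField 𝕜]
    (T : lp (fun _ : ι => 𝕜) p →L[𝕜] lp (fun _ : ι => 𝕜) p) (i j : ι) :
    ‖T (lp.single p j 1) i‖ ≤ ‖T‖ := by
  have hp₀ : 0 < p := zero_lt_one.trans_le Fact.out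
  have h₁ : ‖T (lp.single p j 1) i‖ ≤ ‖T (lp.single p j 1)‖ :=
    lp.norm_apply_le_norm hp₀.ne' _ i
  have h₂ := T.le_opNorm (lp.single p j 1)
  rw [lp.norm_single hp₀, norm_one, mul_one] at h₂
  exact h₁.trans h₂

lemma lp.mul_apply_single_apply_of_comp_eq [NormedField 𝕜] (hp : p ≠ ⊤) {σ : ι → ι}
    (hσ : σ.Injective) {a a' : ι → 𝕜}
    {S S' T₁ T₂ : lp (fun _ : ι => 𝕜) p →L[𝕜] lp (fun _ : ι => 𝕜) p}
    (hS : ∀ n, S (lp.single p n 1) = a n • lp.single p (σ n) 1)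
    (hS' : ∀ n, S' (lp.single p n 1) = a' n • lp.single p (σ n) 1)
    (h : T₂ ∘L S = S' ∘L T₁) (i j : ι) :
    a j * T₂ (lp.single p (σ j) 1) (σ i) = a' i * T₁ (lp.single p j 1) i := calc
  a j * T₂ (lp.single p (σ j) 1) (σ i) = (T₂ ∘L S) (lp.single p j 1) (σ i) := by
    rw [ContinuousLinearMap.comp_apply, hS, map_smul]; rfl
  _ = S' (T₁ (lp.single p j 1)) (σ i) := by rw [h]; rfl
  _ = a' i * T₁ (lp.single p j 1) i := lp.apply_apply_of_map_single hp hσ hS' _ i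

end LpSingle

lemma eq_zero_of_forall_exp_mul_le {x C : ℝ} {s : ℕ → ℝ} (hx : 0 ≤ x)
    (hC : ∀ N, Real.exp (s N) * x ≤ C) (hs : ∀ R, ∃ N, R ≤ s N) : x = 0 := by
  by_contra hne
  obtain ⟨N, hN⟩ := hs (C / x)
  have hexp : C / x + 1 ≤ Real.exp (s N) := by linarith [Real.add_one_le_exp (s N)]
  have h := mul_le_mul_of_nonneg_right hexp hx
  rw [add_mul, div_mul_cancel₀ _ hne, one_mul] at h
  linarith [hC N, hx.lt_of_ne' hne]

namespace KroneckerQuiver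

def IsExpDiagonal (A : ℓ²(ℤ, ℂ) →L[ℂ] ℓ²(ℤ, ℂ)) (a : ℤ → ℝ) : Prop :=
  ∀ n, A (lp.single 2 n 1) = (Real.exp (a n) : ℂ) • lp.single 2 n 1

def IsExpWeightedShift (B : ℓ²(ℤ, ℂ) →L[ℂ] ℓ²(ℤ, ℂ)) (b : ℤ → ℝ) : Prop :=
  ∀ n, B (lp.single 2 n 1) = (Real.exp (b n) : ℂ) • lp.single 2 (n + 1) 1

section Intertwiner

variable {A B A' B' T₁ T₂ : ℓ²(ℤ, ℂ) →L[ℂ] ℓ²(ℤ, ℂ)} {a b a' b' : ℤ → ℝ}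

lemma norm_apply_single_apply_succ (hA : IsExpDiagonal A a) (hB : IsExpWeightedShift B b)
    (hA' : IsExpDiagonal A' a') (hB' : IsExpWeightedShift B' b')
    (h₁ : T₂ ∘L A = A' ∘L T₁) (h₂ : T₂ ∘L B = B' ∘L T₁) (i j : ℤ) :
    ‖T₂ (lp.single 2 (j + 1) 1) (i + 1)‖ =
      Real.exp ((a - b) j - (a' - b') i) * ‖T₂ (lp.single 2 j 1) i‖ := by
  have hAe := congrArg norm <| lp.mul_apply_single_apply_of_comp_eq (σ := id) (by simp)
    Function.injective_id hA hA' h₁ i j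
  have hBe := congrArg norm <| lp.mul_apply_single_apply_of_comp_eq (σ := (· + 1)) (by simp)
    (add_left_injective 1) hB hB' h₂ i j
  simp only [id_eq, Complex.ofReal_exp, Complex.norm_mul, Complex.norm_exp_ofReal] at hAe hBe
  rw [Pi.sub_apply, Pi.sub_apply, Real.exp_sub, Real.exp_sub, Real.exp_sub]
  field_simp
  linear_combination Real.exp (a' i) * hBe - Real.exp (b' i) * hAe

lemma norm_apply_single_apply_add (hA : IsExpDiagonal A a) (hB : IsExpWeightedShift B b)
    (hA' : IsExpDiagonal A' a') (hB' : IsExpWeightedShift B' b')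
    (h₁ : T₂ ∘L A = A' ∘L T₁) (h₂ : T₂ ∘L B = B' ∘L T₁) (i j : ℤ) (N : ℕ) :
    ‖T₂ (lp.single 2 (j + N) 1) (i + N)‖ =
      Real.exp (∑ k ∈ range N, ((a - b) (j + k) - (a' - b') (i + k))) *
        ‖T₂ (lp.single 2 j 1) i‖ := by
  induction N with
  | zero => simp
  | succ N ih =>
    rw [Nat.cast_succ, ← add_assoc, ← add_assoc,
      norm_apply_single_apply_succ hA hB hA' hB' h₁ h₂, ih, sum_range_succ, Real.exp_add]
    ring

theorem eq_zero_of_comp_eq (hA : IsExpDiagonal A a) (hB : IsExpWeightedShift B b)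
    (hA' : IsExpDiagonal A' a') (hB' : IsExpWeightedShift B' b')
    (h₁ : T₂ ∘L A = A' ∘L T₁) (h₂ : T₂ ∘L B = B' ∘L T₁)
    (hgrowth : ∀ i j : ℤ, ∀ R : ℝ, ∃ N : ℕ,
      R ≤ ∑ k ∈ range N, ((a - b) (j + k) - (a' - b') (i + k))) :
    T₁ = 0 ∧ T₂ = 0 := by
  have hT₂ (i j : ℤ) : T₂ (lp.single 2 j 1) i = 0 :=
    norm_eq_zero.1 <| eq_zero_of_forall_exp_mul_le (norm_nonneg _)
      (fun N => (norm_apply_single_apply_add hA hB hA' hB' h₁ h₂ i j N).symm.trans_le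
        (lp.norm_apply_single_apply_le T₂ _ _)) (hgrowth i j)
  have hT₁ (i j : ℤ) : T₁ (lp.single 2 j 1) i = 0 := by
    simpa [hT₂] using (lp.mul_apply_single_apply_of_comp_eq (σ := id) (by simp)
      Function.injective_id hA hA' h₁ i j).symm
  exact ⟨lp.eq_zero_of_apply_single_apply (by simp) hT₁,
    lp.eq_zero_of_apply_single_apply (by simp) hT₂⟩

end Intertwiner

-- `a^λ = exp ∘ logWeightA λ` and `b^λ = exp ∘ logWeightB λ`.
def logWeightA (l : ℝ) (n : ℤ) : ℝ := if 1 ≤ n ∧ Even n then -(l ^ n.toNat) else 0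

def logWeightB (l : ℝ) (n : ℤ) : ℝ := if 1 ≤ n ∧ Odd n then -(l ^ n.toNat) else 0

lemma ofReal_exp_logWeightA (l : ℝ) (n : ℤ) :
    (Real.exp (logWeightA l n) : ℂ) =
      if 1 ≤ n ∧ Even n then (Real.exp (-(l ^ n.toNat)) : ℂ) else 1 := by
  unfold logWeightA
  split_ifs <;> simp

lemma ofReal_exp_logWeightB (l : ℝ) (n : ℤ) :
    (Real.exp (logWeightB l n) : ℂ) =
      if 1 ≤ n ∧ Odd n then (Real.exp (-(l ^ n.toNat)) : ℂ) else 1 := by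
  unfold logWeightB
  split_ifs <;> simp

-- The closed form of `∑_{n=1}^{M} -(-l)ⁿ = ∑_{n=1}^{M} (logWeightA l - logWeightB l) n`
-- (an empty sum for `M ≤ 0`, where `M.toNat = 0`).
noncomputable def phaseSum (l : ℝ) (M : ℤ) : ℝ := l * (1 - (-l) ^ M.toNat) / (1 + l)

variable {l m : ℝ}

lemma phaseSum_add_one_sub (hl : 1 + l ≠ 0) (M : ℤ) :
    phaseSum l (M + 1) - phaseSum l M = (logWeightA l - logWeightB l) (M + 1) := by
  rcases lt_or_ge M 0 with hM | hM
  · simp [phaseSum, logWeightA, logWeightB, show (M + 1).toNat = 0 by omega,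
      show M.toNat = 0 by omega, show ¬ 1 ≤ M + 1 by omega]
  obtain ⟨n, rfl⟩ := Int.eq_ofNat_of_zero_le hM
  have hdiff : phaseSum l (n + 1) - phaseSum l n = l * (-l) ^ n := by
    simp only [phaseSum, show ((n : ℤ) + 1).toNat = n + 1 by omega, Int.toNat_natCast]
    field_simp
    ring
  rw [hdiff]
  simp only [Pi.sub_apply, logWeightA, logWeightB, show ((n : ℤ) + 1).toNat = n + 1 by omega,
    show (1 : ℤ) ≤ n + 1 by omega, true_and]
  rcases Nat.even_or_odd n with hn | hn
  · simp [hn.neg_pow, hn, Nat.not_odd_iff_even.2 hn, parity_simps, pow_succ']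
  · simp [hn.neg_pow, hn, Nat.not_even_iff_odd.2 hn, parity_simps, pow_succ']

lemma sum_logWeight_sub (hl : 1 + l ≠ 0) (j : ℤ) (N : ℕ) :
    ∑ k ∈ range N, (logWeightA l - logWeightB l) (j + k) =
      phaseSum l (j - 1 + N) - phaseSum l (j - 1) := by
  have h := sum_range_sub (fun k : ℕ => phaseSum l (j - 1 + k)) N
  simp only [Nat.cast_zero, add_zero, Nat.cast_succ, ← add_assoc, phaseSum_add_one_sub hl] at h
  rw [← h]
  exact sum_congr rfl fun k _ => by rw [show j - 1 + (k : ℤ) + 1 = j + k by ring]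

lemma abs_phaseSum_le (hl : 0 < l) (M : ℤ) : |phaseSum l M| ≤ 1 + l ^ M.toNat := by
  have h : |1 - (-l) ^ M.toNat| ≤ 1 + l ^ M.toNat := by
    simpa [abs_pow, abs_of_pos hl] using abs_sub (1 : ℝ) ((-l) ^ M.toNat)
  rw [phaseSum, abs_div, abs_mul, abs_of_pos hl, abs_of_pos (show 0 < 1 + l by linarith),
    div_le_iff₀ (by linarith)]
  nlinarith [abs_nonneg (1 - (-l) ^ M.toNat), pow_nonneg hl.le M.toNat]

lemma le_phaseSum_of_odd (hl : 1 ≤ l) {M : ℤ} (hM : Odd M.toNat) :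
    l ^ M.toNat / 2 ≤ phaseSum l M := by
  rw [phaseSum, hM.neg_pow, le_div_iff₀ (by linarith)]
  nlinarith [one_le_pow₀ (n := M.toNat) hl]

lemma phaseSum_le_of_even (hl : 1 ≤ l) {M : ℤ} (hM : Even M.toNat) :
    phaseSum l M ≤ 1 - l ^ M.toNat / 2 := by
  rw [phaseSum, hM.neg_pow, div_le_iff₀ (by linarith)]
  nlinarith [one_le_pow₀ (n := M.toNat) hl]

lemma pow_toNat_add_le (hl : 1 ≤ l) (j : ℤ) (N : ℕ) :
    l ^ (j + N).toNat ≤ l ^ j.toNat * l ^ N := by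
  rw [← pow_add]
  exact pow_le_pow_right₀ hl (by omega)

lemma pow_div_le_pow_toNat_add (hl : 1 ≤ l) (j : ℤ) (N : ℕ) :
    l ^ N / l ^ (-j).toNat ≤ l ^ (j + N).toNat := by
  rw [div_le_iff₀ (by positivity), ← pow_add]
  exact pow_le_pow_right₀ hl (by omega)

lemma tendsto_mul_pow_sub_mul_pow_atTop {p q c : ℝ} (hp : 1 < p) (hq : 0 ≤ q) (hqp : q < p)
    (hc : 0 < c) (d : ℝ) : Tendsto (fun n : ℕ => c * p ^ n - d * q ^ n) atTop atTop := by
  have hp₀ : 0 < p := by linarith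
  have h : Tendsto (fun n : ℕ => c - d * (q / p) ^ n) atTop (nhds c) := by
    simpa using ((tendsto_pow_atTop_nhds_zero_of_lt_one (div_nonneg hq hp₀.le)
      ((div_lt_one hp₀).2 hqp)).const_mul d).const_sub c
  refine ((tendsto_pow_atTop_atTop_of_one_lt hp).atTop_mul_pos hc h).congr fun n => ?_
  rw [div_pow]
  field_simp

lemma frequently_toNat_add_mod_two (j : ℤ) (r : ℕ) :
    ∃ᶠ N : ℕ in atTop, (j + N).toNat % 2 = r % 2 :=
  frequently_atTop.2 fun a => ⟨(2 * (a + j.natAbs) + r % 2 - j).toNat, by omega, by omega⟩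

lemma exists_le_phaseSum_sub (hl : 1 < l) (hm : 1 < m) (hlm : l ≠ m) (i j : ℤ) (R : ℝ) :
    ∃ N : ℕ, R ≤ phaseSum l (j + N) - phaseSum m (i + N) := by
  -- The partial sums of the larger parameter dominate; follow the indices where their sign helps.
  rcases hlm.lt_or_gt with hlm | hml
  · obtain ⟨N, hN, heven⟩ := ((tendsto_mul_pow_sub_mul_pow_atTop hm (by linarith) hlm
      (c := 1 / (2 * m ^ (-i).toNat)) (by positivity) (l ^ j.toNat)).eventually_ge_atTop
      (R + 2) |>.and_frequently (frequently_toNat_add_mod_two i 0)).exists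
    have hm' := phaseSum_le_of_even hm.le (Nat.even_iff.2 heven)
    have hl' := (abs_le.1 (abs_phaseSum_le (zero_lt_one.trans hl) (j + N))).1
    have hc : 1 / (2 * m ^ (-i).toNat) * m ^ N = m ^ N / m ^ (-i).toNat / 2 := by ring
    exact ⟨N, by linarith [pow_toNat_add_le hl.le j N, pow_div_le_pow_toNat_add hm.le i N]⟩
  · obtain ⟨N, hN, hodd⟩ := ((tendsto_mul_pow_sub_mul_pow_atTop hl (by linarith) hml
      (c := 1 / (2 * l ^ (-j).toNat)) (by positivity) (m ^ i.toNat)).eventually_ge_atTop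
      (R + 1) |>.and_frequently (frequently_toNat_add_mod_two j 1)).exists
    have hl' := le_phaseSum_of_odd hl.le (Nat.odd_iff.2 hodd)
    have hm' := (abs_le.1 (abs_phaseSum_le (zero_lt_one.trans hm) (i + N))).2
    have hc : 1 / (2 * l ^ (-j).toNat) * l ^ N = l ^ N / l ^ (-j).toNat / 2 := by ring
    exact ⟨N, by linarith [pow_toNat_add_le hm.le i N, pow_div_le_pow_toNat_add hl.le j N]⟩

lemma exists_le_sum_logWeight_sub (hl : 1 < l) (hm : 1 < m) (hlm : l ≠ m) (i j : ℤ) (R : ℝ) :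
    ∃ N : ℕ, R ≤ ∑ k ∈ range N,
      ((logWeightA l - logWeightB l) (j + k) - (logWeightA m - logWeightB m) (i + k)) := by
  obtain ⟨N, hN⟩ := exists_le_phaseSum_sub hl hm hlm (i - 1) (j - 1)
    (R + phaseSum l (j - 1) - phaseSum m (i - 1))
  refine ⟨N, ?_⟩
  rw [sum_sub_distrib, sum_logWeight_sub (by linarith) j N, sum_logWeight_sub (by linarith) i N]
  linarith

end KroneckerQuiver

open KroneckerQuiver

/-- **Continuously many non-isomorphic transitive Kronecker representations.**
For a real constant `λ > 1` let `A^λ = D_{a^λ}` and `B^λ = U D_{b^λ}` on `ℓ²(ℤ)`, where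
`a^λ(n) = exp(-λⁿ)` for even `n ≥ 1` and `1` otherwise, and `b^λ(n) = exp(-λⁿ)` for odd
`n ≥ 1` and `1` otherwise.  If `λ ≠ μ` with `λ, μ > 1`, then every homomorphism
`(T₁,T₂)` from `(H^λ,f^λ)` to `(H^μ,f^μ)` (i.e. `T₂ A^λ = A^μ T₁`, `T₂ B^λ = B^μ T₁`)
is zero; in particular the two representations are not isomorphic. -/
theorem stmt_14 (l m : ℝ) (hl : 1 < l) (hm : 1 < m) (hlm : l ≠ m)
    (Al Bl Am Bm : lp (fun _ : ℤ => ℂ) 2 →L[ℂ] lp (fun _ : ℤ => ℂ) 2)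
    (hAl : ∀ n : ℤ, Al (lp.single 2 n (1 : ℂ)) =
      (if 1 ≤ n ∧ Even n then (Real.exp (-(l ^ n.toNat)) : ℂ) else 1) •
        lp.single 2 n (1 : ℂ))
    (hBl : ∀ n : ℤ, Bl (lp.single 2 n (1 : ℂ)) =
      (if 1 ≤ n ∧ Odd n then (Real.exp (-(l ^ n.toNat)) : ℂ) else 1) •
        lp.single 2 (n + 1) (1 : ℂ))
    (hAm : ∀ n : ℤ, Am (lp.single 2 n (1 : ℂ)) =
      (if 1 ≤ n ∧ Even n then (Real.exp (-(m ^ n.toNat)) : ℂ) else 1) •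
        lp.single 2 n (1 : ℂ))
    (hBm : ∀ n : ℤ, Bm (lp.single 2 n (1 : ℂ)) =
      (if 1 ≤ n ∧ Odd n then (Real.exp (-(m ^ n.toNat)) : ℂ) else 1) •
        lp.single 2 (n + 1) (1 : ℂ)) :
    (∀ T₁ T₂ : lp (fun _ : ℤ => ℂ) 2 →L[ℂ] lp (fun _ : ℤ => ℂ) 2,
      T₂ ∘L Al = Am ∘L T₁ → T₂ ∘L Bl = Bm ∘L T₁ → T₁ = 0 ∧ T₂ = 0)
    ∧
    ¬ ∃ φ₁ φ₂ : lp (fun _ : ℤ => ℂ) 2 →L[ℂ] lp (fun _ : ℤ => ℂ) 2,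
      IsUnit φ₁ ∧ IsUnit φ₂ ∧ φ₂ ∘L Al = Am ∘L φ₁ ∧ φ₂ ∘L Bl = Bm ∘L φ₁ := by
  have hom (T₁ T₂ : lp (fun _ : ℤ => ℂ) 2 →L[ℂ] lp (fun _ : ℤ => ℂ) 2)
      (h₁ : T₂ ∘L Al = Am ∘L T₁) (h₂ : T₂ ∘L Bl = Bm ∘L T₁) : T₁ = 0 ∧ T₂ = 0 :=
    eq_zero_of_comp_eq (fun n => by rw [hAl, ofReal_exp_logWeightA])
      (fun n => by rw [hBl, ofReal_exp_logWeightB]) (fun n => by rw [hAm, ofReal_exp_logWeightA])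
      (fun n => by rw [hBm, ofReal_exp_logWeightB]) h₁ h₂ (exists_le_sum_logWeight_sub hl hm hlm)
  refine ⟨hom, ?_⟩
  rintro ⟨φ₁, φ₂, hφ₁, -, h₁, h₂⟩
  exact not_isUnit_zero ((hom φ₁ φ₂ h₁ h₂).1 ▸ hφ₁)
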